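/- arXiv:1011.1521 — 4 statements merged into one kernel-verified Lean document; each statement's English description precedes it below -/
import Mathlib

section
/- For every piecewise C¹ path a : [0,1] → P_n one has L(a) ≥ (4/√n)·|det(g⁻¹a(1))^{1/4} − det(g⁻¹a(0))^{1/4}|. Consequently, for all a₀, a₁ ∈ P_n, d(a₀, a₁) ≥ (4/√n)·|det(g⁻¹a₁)^{1/4} − det(g⁻¹a₀)^{1/4}|. -/
open Matrix Real MeasureTheory Filter

noncomputable section

/-- The set of real symmetric positive-definite `n × n` matrices. -/
def Pn (n : ℕ) : Set (Matrix (Fin n) (Fin n) ℝ) := {a | a.PosDef}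

/-- `tr_a(b) = tr(a⁻¹ b)`. -/
def trA {n : ℕ} (a b : Matrix (Fin n) (Fin n) ℝ) : ℝ := (a⁻¹ * b).trace

/-- `tr_a(b²) = tr((a⁻¹ b)²)`. -/
def trSq {n : ℕ} (a b : Matrix (Fin n) (Fin n) ℝ) : ℝ := ((a⁻¹ * b) * (a⁻¹ * b)).trace

/-- The `a`-traceless part `b_T = b - (1/n) tr_a(b) a`. -/
def tracelessPart {n : ℕ} (a b : Matrix (Fin n) (Fin n) ℝ) : Matrix (Fin n) (Fin n) ℝ :=
  b - ((trA a b) / (n : ℝ)) • a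

/-- `(det (g⁻¹ a))^{1/4}`. -/
def qdet {n : ℕ} (g a : Matrix (Fin n) (Fin n) ℝ) : ℝ := ((g⁻¹ * a).det) ^ ((1 : ℝ) / 4)

/-- The norm `‖b‖_a = (tr((a⁻¹b)²))^{1/2} (det (g⁻¹ a))^{1/4}`. -/
def fiberNorm {n : ℕ} (g a b : Matrix (Fin n) (Fin n) ℝ) : ℝ :=
  Real.sqrt (trSq a b) * qdet g a

/-- Entrywise derivative of a path of matrices. -/
def pathDeriv {n : ℕ} (γ : ℝ → Matrix (Fin n) (Fin n) ℝ) (t : ℝ) : Matrix (Fin n) (Fin n) ℝ :=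
  Matrix.of fun i j => deriv (fun s => γ s i j) t

/-- A path of matrices is `C¹` on a set if it is entrywise `C¹` there. -/
def C1On {n : ℕ} (γ : ℝ → Matrix (Fin n) (Fin n) ℝ) (s : Set ℝ) : Prop :=
  ∀ i j, ContDiffOn ℝ 1 (fun t => γ t i j) s

/-- `γ` is piecewise `C¹` on `[t₀, t₁]`. -/
def PiecewiseC1On {n : ℕ} (γ : ℝ → Matrix (Fin n) (Fin n) ℝ) (t₀ t₁ : ℝ) : Prop :=
  ContinuousOn γ (Set.Icc t₀ t₁) ∧
  ∃ (k : ℕ) (s : Fin (k + 1) → ℝ), StrictMono s ∧ s 0 = t₀ ∧ s (Fin.last k) = t₁ ∧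
    ∀ i : Fin k, C1On γ (Set.Icc (s i.castSucc) (s i.succ))

/-- Length of a path with respect to the fiber metric determined by `g`. -/
def pathLength {n : ℕ} (g : Matrix (Fin n) (Fin n) ℝ) (γ : ℝ → Matrix (Fin n) (Fin n) ℝ)
    (t₀ t₁ : ℝ) : ℝ :=
  ∫ t in t₀..t₁, fiberNorm g (γ t) (pathDeriv γ t)

/-- The Riemannian distance: the infimum of lengths of piecewise `C¹` paths in `P_n`. -/
def ebinDist {n : ℕ} (g a₀ a₁ : Matrix (Fin n) (Fin n) ℝ) : ℝ :=
  sInf {L : ℝ | ∃ γ : ℝ → Matrix (Fin n) (Fin n) ℝ,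
    PiecewiseC1On γ 0 1 ∧ (∀ t ∈ Set.Icc (0 : ℝ) 1, γ t ∈ Pn n) ∧
    γ 0 = a₀ ∧ γ 1 = a₁ ∧ L = pathLength g γ 0 1}

/-- `a·exp(a⁻¹ b)`, using the matrix exponential. -/
def expAt {n : ℕ} (a b : Matrix (Fin n) (Fin n) ℝ) : Matrix (Fin n) (Fin n) ℝ :=
  a * NormedSpace.exp (a⁻¹ * b)

/-- The explicit geodesic with initial point `a₀` and initial tangent `h`. -/
def geodesicPath {n : ℕ} (a₀ h : Matrix (Fin n) (Fin n) ℝ) (t : ℝ) : Matrix (Fin n) (Fin n) ℝ :=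
  let hT := tracelessPart a₀ h
  let q : ℝ := 1 + t / 4 * trA a₀ h
  let r : ℝ := t / 4 * Real.sqrt ((n : ℝ) * trSq a₀ hT)
  if hT = 0 then (q ^ ((4 : ℝ) / n)) • a₀
  else ((q ^ 2 + r ^ 2) ^ ((2 : ℝ) / n)) •
    (a₀ * NormedSpace.exp
      ((4 * Complex.arg ⟨q, r⟩ / Real.sqrt ((n : ℝ) * trSq a₀ hT)) • (a₀⁻¹ * hT)))

/-- The inverse `ψ` of the Riemannian exponential mapping based at `a₀`. -/
def psiMap {n : ℕ} (a₀ b : Matrix (Fin n) (Fin n) ℝ) : Matrix (Fin n) (Fin n) ℝ :=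
  let bT := tracelessPart a₀ b
  let ω : ℝ := Real.sqrt ((n : ℝ) * trSq a₀ bT) / 4
  if bT = 0 then ((4 / (n : ℝ)) * (Real.exp (trA a₀ b / 4) - 1)) • a₀
  else ((4 / (n : ℝ)) * (Real.exp (trA a₀ b / 4) * Real.cos ω - 1)) • a₀ +
    ((4 / Real.sqrt ((n : ℝ) * trSq a₀ bT)) * Real.exp (trA a₀ b / 4) * Real.sin ω) • bT

/-!
Along a path `a(t)` in `P_n`, Jacobi's formula gives
`d/dt det(g⁻¹a)^{1/4} = ¼ tr(a⁻¹a') det(g⁻¹a)^{1/4}`, and Cauchy–Schwarz for the symmetric matrix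
`a^{-1/2} a' a^{-1/2}` gives `|tr(a⁻¹a')| ≤ √n tr((a⁻¹a')²)^{1/2}`. Hence `det(g⁻¹a)^{1/4}` moves at
most at rate `√n/4 · ‖a'‖_a`, and integrating over the `C¹` pieces bounds its total change by
`√n/4 · L(a)`. The bound on `d` follows by taking the infimum; there is at least one path, the
straight segment, since `P_n` is convex.
-/

open Set Topology

namespace Matrix

variable {ι : Type*} [Fintype ι] [DecidableEq ι]

theorem sum_det_updateRow_eq_trace_adjugate_mul {R : Type*} [CommRing R] (A B : Matrix ι ι R) :
    ∑ i, (A.updateRow i (B i)).det = (A.adjugate * B).trace := by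
  simp_rw [← cramer_transpose_apply, cramer_eq_adjugate_mulVec, ← adjugate_transpose, trace,
    diag_apply, mul_apply, mulVec, dotProduct, transpose_apply]
  exact Finset.sum_comm

section Jacobi

variable {𝕜 : Type*} [NontriviallyNormedField 𝕜]

def detRowContinuousMultilinear : ContinuousMultilinearMap 𝕜 (fun _ : ι => ι → 𝕜) 𝕜 where
  toMultilinearMap := (detRowAlternating : (ι → 𝕜) [⋀^ι]→ₗ[𝕜] 𝕜).toMultilinearMap
  cont := continuous_id.matrix_det

theorem hasDerivAt_det {γ : 𝕜 → Matrix ι ι 𝕜} {γ' : Matrix ι ι 𝕜} {t : 𝕜}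
    (h : ∀ i j, HasDerivAt (fun s => γ s i j) (γ' i j) t) :
    HasDerivAt (fun s => (γ s).det) ((γ t).adjugate * γ').trace t := by
  have hrows : HasDerivAt (fun s i j => γ s i j) (fun i j => γ' i j) t :=
    hasDerivAt_pi.2 fun i => hasDerivAt_pi.2 (h i)
  have hcomp := (detRowContinuousMultilinear.hasFDerivAt _).comp_hasDerivAt t hrows
  rw [← sum_det_updateRow_eq_trace_adjugate_mul]
  exact hcomp.congr_deriv (ContinuousMultilinearMap.linearDeriv_apply _ _ _)

theorem hasDerivAt_det_of_det_ne_zero {γ : 𝕜 → Matrix ι ι 𝕜} {γ' : Matrix ι ι 𝕜} {t : 𝕜}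
    (hγ : (γ t).det ≠ 0) (h : ∀ i j, HasDerivAt (fun s => γ s i j) (γ' i j) t) :
    HasDerivAt (fun s => (γ s).det) ((γ t).det * ((γ t)⁻¹ * γ').trace) t := by
  convert hasDerivAt_det h using 1
  rw [← smul_eq_mul, ← trace_smul, ← smul_mul, inv_def, Ring.inverse_eq_inv, smul_smul,
    mul_inv_cancel₀ hγ, one_smul]

end Jacobi

theorem PosDef.det_inv_mul_pos {g a : Matrix ι ι ℝ} (hg : g.PosDef) (ha : a.PosDef) :
    0 < (g⁻¹ * a).det := by
  simpa [det_mul] using mul_pos (inv_pos.2 hg.det_pos) ha.det_pos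

omit [DecidableEq ι] in
theorem trace_mul_self_eq_sum_sq {S : Matrix ι ι ℝ} (hS : S.IsSymm) :
    (S * S).trace = ∑ i, ∑ j, S i j ^ 2 := by
  nth_rewrite 2 [← hS.eq]
  simp only [trace, diag_apply, mul_apply, transpose_apply, sq]

omit [DecidableEq ι] in
theorem abs_trace_le_sqrt_card_mul_sqrt_trace_mul_self {S : Matrix ι ι ℝ} (hS : S.IsSymm) :
    |S.trace| ≤ √(Fintype.card ι) * √((S * S).trace) := by
  have hdiag : S.trace ^ 2 ≤ Fintype.card ι * ∑ i, S i i ^ 2 := by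
    simpa [trace] using sq_sum_le_card_mul_sum_sq (s := Finset.univ) (f := fun i => S i i)
  have hoff : ∑ i, S i i ^ 2 ≤ (S * S).trace := by
    rw [trace_mul_self_eq_sum_sq hS]
    exact Finset.sum_le_sum fun i _ =>
      Finset.single_le_sum (f := fun j => S i j ^ 2) (fun j _ => sq_nonneg _) (Finset.mem_univ i)
  rw [← Real.sqrt_mul (Nat.cast_nonneg _), ← Real.sqrt_sq_eq_abs]
  exact Real.sqrt_le_sqrt (hdiag.trans (by gcongr))

open scoped MatrixOrder in
theorem PosDef.abs_trace_inv_mul_le {a b : Matrix ι ι ℝ} (ha : a.PosDef) (hb : b.IsSymm) :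
    |(a⁻¹ * b).trace| ≤ √(Fintype.card ι) * √((a⁻¹ * b * (a⁻¹ * b)).trace) := by
  set c := CFC.sqrt a⁻¹
  have hc : c * c = a⁻¹ := CFC.sqrt_mul_sqrt_self _ (nonneg_iff_posSemidef.2 ha.inv.posSemidef)
  have hcsymm : c.IsSymm := isHermitian_iff_isSymm.1 (CFC.sqrt_nonneg a⁻¹).isSelfAdjoint
  have hS : (c * b * c).IsSymm := by
    simp only [IsSymm, transpose_mul, hcsymm.eq, hb.eq, mul_assoc]
  have h1 : (a⁻¹ * b).trace = (c * b * c).trace := by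
    rw [← hc, mul_assoc, trace_mul_comm, mul_assoc]
  have h2 : (a⁻¹ * b * (a⁻¹ * b)).trace = (c * b * c * (c * b * c)).trace := by
    rw [← hc, show c * c * b * (c * c * b) = c * (c * b * c * c * b) by simp only [mul_assoc],
      trace_mul_comm]
    simp only [mul_assoc]
  rw [h1, h2]
  exact abs_trace_le_sqrt_card_mul_sqrt_trace_mul_self hS

end Matrix

theorem intervalIntegrable_and_abs_sub_le_integral_of_pieces {F I : ℝ → ℝ} {c : ℝ} {k : ℕ}
    (s : Fin (k + 1) → ℝ)
    (h : ∀ i : Fin k, IntervalIntegrable I volume (s i.castSucc) (s i.succ) ∧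
      |F (s i.succ) - F (s i.castSucc)| ≤ c * ∫ t in s i.castSucc..s i.succ, I t) :
    IntervalIntegrable I volume (s 0) (s (Fin.last k)) ∧
      |F (s (Fin.last k)) - F (s 0)| ≤ c * ∫ t in s 0..s (Fin.last k), I t := by
  induction k with
  | zero =>
    rw [Fin.last_zero, sub_self, abs_zero, intervalIntegral.integral_same, mul_zero]
    exact ⟨IntervalIntegrable.refl, le_rfl⟩
  | succ k ih =>
    obtain ⟨hint, hle⟩ := ih (Fin.tail s) fun i => by
      simpa only [Fin.tail, Fin.succ_castSucc] using h i.succ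
    simp only [Fin.tail, Fin.succ_last, Fin.succ_zero_eq_one] at hint hle
    obtain ⟨hint₀, hle₀⟩ := h 0
    simp only [Fin.castSucc_zero, Fin.succ_zero_eq_one] at hint₀ hle₀
    refine ⟨hint₀.trans hint, ?_⟩
    rw [← intervalIntegral.integral_add_adjacent_intervals hint₀ hint, mul_add]
    linarith [abs_sub_le (F (s (Fin.last (k + 1)))) (F (s 1)) (F (s 0))]

section FiberMetric

variable {n : ℕ} {g : Matrix (Fin n) (Fin n) ℝ}

theorem qdet_pos (hg : g.PosDef) {a : Matrix (Fin n) (Fin n) ℝ} (ha : a.PosDef) : 0 < qdet g a :=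
  Real.rpow_pos_of_pos (hg.det_inv_mul_pos ha) _

theorem hasDerivAt_qdet (hg : g.PosDef) {γ : ℝ → Matrix (Fin n) (Fin n) ℝ}
    {γ' : Matrix (Fin n) (Fin n) ℝ} {t : ℝ} (hγ : (γ t).PosDef)
    (h : ∀ i j, HasDerivAt (fun s => γ s i j) (γ' i j) t) :
    HasDerivAt (fun s => qdet g (γ s)) (trA (γ t) γ' / 4 * qdet g (γ t)) t := by
  have hdet : 0 < (g⁻¹).det * (γ t).det := by
    rw [← det_mul]
    exact hg.det_inv_mul_pos hγ
  have := ((hasDerivAt_det_of_det_ne_zero hγ.det_pos.ne' h).const_mul (g⁻¹).det).rpow_const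
    (p := 1 / 4) (Or.inl hdet.ne')
  simp only [qdet, det_mul]
  refine this.congr_deriv ?_
  rw [trA, Real.rpow_sub_one hdet.ne']
  field_simp
  exact mul_div_cancel_left₀ _ hdet.ne'

theorem abs_trA_div_four_mul_qdet_le (hg : g.PosDef) {a b : Matrix (Fin n) (Fin n) ℝ}
    (ha : a.PosDef) (hb : b.IsSymm) : |trA a b / 4 * qdet g a| ≤ √n / 4 * fiberNorm g a b := by
  have htr : |trA a b| ≤ √n * √(trSq a b) := by
    simpa [trA, trSq] using ha.abs_trace_inv_mul_le hb
  rw [abs_mul, abs_of_pos (qdet_pos hg ha), abs_div, abs_of_pos (four_pos : (0:ℝ) < 4), fiberNorm]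
  calc |trA a b| / 4 * qdet g a ≤ √n * √(trSq a b) / 4 * qdet g a := by
        gcongr
        exact (qdet_pos hg ha).le
    _ = √n / 4 * (√(trSq a b) * qdet g a) := by ring

theorem ContinuousOn.qdet {α : Type*} [TopologicalSpace α] {γ : α → Matrix (Fin n) (Fin n) ℝ}
    {s : Set α} (hγ : ContinuousOn γ s) : ContinuousOn (fun t => qdet g (γ t)) s :=
  (continuous_id.matrix_det.comp_continuousOn (continuousOn_const.mul hγ)).rpow_const
    fun _ _ => Or.inr (by norm_num)

theorem ContinuousOn.fiberNorm {α : Type*} [TopologicalSpace α]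
    {γ δ : α → Matrix (Fin n) (Fin n) ℝ} {s : Set α} (hγ : ContinuousOn γ s)
    (hδ : ContinuousOn δ s) (hpos : ∀ t ∈ s, (γ t).PosDef) :
    ContinuousOn (fun t => fiberNorm g (γ t) (δ t)) s := by
  have hinv : ContinuousOn (fun t => (γ t)⁻¹) s := fun t ht =>
    (continuousAt_matrix_inv _ (by simpa using continuousAt_inv₀ (hpos t ht).det_pos.ne'))
      |>.comp_continuousWithinAt (hγ t ht)
  have hmul : ContinuousOn (fun t => (γ t)⁻¹ * δ t) s := hinv.mul hδ
  exact (continuous_id.matrix_trace.comp_continuousOn (hmul.mul hmul)).sqrt.mul hγ.qdet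

end FiberMetric

section Paths

variable {n : ℕ} {γ : ℝ → Matrix (Fin n) (Fin n) ℝ} {a b t : ℝ}

theorem C1On.continuousOn {s : Set ℝ} (h : C1On γ s) : ContinuousOn γ s :=
  continuousOn_pi.2 fun i => continuousOn_pi.2 fun j => (h i j).continuousOn

theorem C1On.hasDerivAt (h : C1On γ (Icc a b)) (ht : t ∈ Ioo a b) (i j : Fin n) :
    HasDerivAt (fun s => γ s i j) (pathDeriv γ t i j) t :=
  (((h i j).differentiableOn one_ne_zero t (Ioo_subset_Icc_self ht)).differentiableAt
    (Icc_mem_nhds ht.1 ht.2)).hasDerivAt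

theorem C1On.exists_continuousOn_eqOn_pathDeriv (h : C1On γ (Icc a b)) (hab : a < b) :
    ∃ δ : ℝ → Matrix (Fin n) (Fin n) ℝ,
      ContinuousOn δ (Icc a b) ∧ EqOn (pathDeriv γ) δ (Ioo a b) :=
  ⟨fun t => Matrix.of fun i j => derivWithin (fun s => γ s i j) (Icc a b) t,
    continuousOn_pi.2 fun i => continuousOn_pi.2 fun j =>
      (h i j).continuousOn_derivWithin (uniqueDiffOn_Icc hab) le_rfl,
    fun _ ht => Matrix.ext fun _ _ => (derivWithin_of_mem_nhds (Icc_mem_nhds ht.1 ht.2)).symm⟩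

theorem pathDeriv_isSymm (h : ∀ᶠ s in 𝓝 t, (γ s).IsSymm) : (pathDeriv γ t).IsSymm :=
  Matrix.ext fun i j => Filter.EventuallyEq.deriv_eq <| h.mono fun s hs => by
    simpa using congrFun (congrFun hs.eq i) j

variable {g : Matrix (Fin n) (Fin n) ℝ}

theorem C1On.intervalIntegrable_fiberNorm (h : C1On γ (Icc a b)) (hab : a < b)
    (hpos : ∀ t ∈ Icc a b, (γ t).PosDef) :
    IntervalIntegrable (fun t => fiberNorm g (γ t) (pathDeriv γ t)) volume a b := by
  -- `pathDeriv` is a two-sided `deriv`, which may be junk at `a` and `b`.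
  obtain ⟨δ, hδ, hδγ⟩ := h.exists_continuousOn_eqOn_pathDeriv hab
  rw [intervalIntegrable_iff_integrableOn_Ioo_of_le hab.le]
  refine IntegrableOn.congr_fun ?_ (fun t ht => by rw [hδγ ht]) measurableSet_Ioo
  exact ((h.continuousOn.fiberNorm hδ hpos).integrableOn_Icc).mono_set Ioo_subset_Icc_self

theorem C1On.abs_qdet_sub_le_pathLength (hg : g.PosDef) (h : C1On γ (Icc a b)) (hab : a < b)
    (hpos : ∀ t ∈ Icc a b, (γ t).PosDef) :
    |qdet g (γ b) - qdet g (γ a)| ≤ √n / 4 * pathLength g γ a b := by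
  have hderiv : ∀ t ∈ Ioo a b, HasDerivAt (fun s => qdet g (γ s))
      (trA (γ t) (pathDeriv γ t) / 4 * qdet g (γ t)) t := fun t ht =>
    hasDerivAt_qdet hg (hpos t (Ioo_subset_Icc_self ht)) (h.hasDerivAt ht)
  rw [pathLength, ← intervalIntegral.integral_const_mul]
  refine norm_sub_le_integral_of_norm_deriv_le_of_le hab.le h.continuousOn.qdet
    (fun t ht => (hderiv t ht).differentiableAt.differentiableWithinAt)
    (Eventually.of_forall fun t ht => ?_) ((h.intervalIntegrable_fiberNorm hab hpos).const_mul _)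
  have hsymm : (pathDeriv γ t).IsSymm := pathDeriv_isSymm <|
    eventually_of_mem (Icc_mem_nhds ht.1 ht.2) fun s hs => isHermitian_iff_isSymm.1 (hpos s hs).1
  rw [(hderiv t ht).deriv, Real.norm_eq_abs]
  exact abs_trA_div_four_mul_qdet_le hg (hpos t (Ioo_subset_Icc_self ht)) hsymm

theorem PiecewiseC1On.abs_qdet_sub_le_pathLength (hg : g.PosDef) {t₀ t₁ : ℝ}
    (hγ : PiecewiseC1On γ t₀ t₁) (hpos : ∀ t ∈ Icc t₀ t₁, γ t ∈ Pn n) :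
    |qdet g (γ t₁) - qdet g (γ t₀)| ≤ √n / 4 * pathLength g γ t₀ t₁ := by
  obtain ⟨-, k, s, hs, rfl, rfl, hC1⟩ := hγ
  rw [pathLength]
  refine (intervalIntegrable_and_abs_sub_le_integral_of_pieces (F := fun t => qdet g (γ t))
    (I := fun t => fiberNorm g (γ t) (pathDeriv γ t)) s fun i => ?_).2
  have hlt : s i.castSucc < s i.succ := hs Fin.castSucc_lt_succ
  have hpos' : ∀ t ∈ Icc (s i.castSucc) (s i.succ), (γ t).PosDef := fun t ht =>
    hpos t ⟨(hs.monotone (Fin.zero_le _)).trans ht.1, ht.2.trans (hs.monotone (Fin.le_last _))⟩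
  exact ⟨(hC1 i).intervalIntegrable_fiberNorm hlt hpos',
    (hC1 i).abs_qdet_sub_le_pathLength hg hlt hpos'⟩

end Paths

theorem piecewiseC1On_segment {n : ℕ} (a₀ a₁ : Matrix (Fin n) (Fin n) ℝ) :
    PiecewiseC1On (fun t : ℝ => (1 - t) • a₀ + t • a₁) 0 1 := by
  refine ⟨by fun_prop, 1, fun i => (i : ℝ), fun i j hij => Nat.cast_lt.2 hij, by simp, by simp,
    fun _ i j => ?_⟩
  simp only [Matrix.add_apply, Matrix.smul_apply, smul_eq_mul]
  fun_prop

theorem segment_mem_Pn {n : ℕ} {a₀ a₁ : Matrix (Fin n) (Fin n) ℝ} (h₀ : a₀ ∈ Pn n) (h₁ : a₁ ∈ Pn n)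
    {t : ℝ} (ht : t ∈ Icc (0 : ℝ) 1) : (1 - t) • a₀ + t • a₁ ∈ Pn n := by
  rcases ht.2.lt_or_eq with ht1 | rfl
  · exact (h₀.smul (sub_pos.2 ht1)).add_posSemidef (h₁.posSemidef.smul ht.1)
  · simpa using h₁

/-- lower bound for lengths and distance via fourth roots of determinants. -/
theorem stmt_0 (n : ℕ) (hn : 1 ≤ n) (g : Matrix (Fin n) (Fin n) ℝ) (hg : g ∈ Pn n) :
    (∀ γ : ℝ → Matrix (Fin n) (Fin n) ℝ, PiecewiseC1On γ 0 1 →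
      (∀ t ∈ Set.Icc (0 : ℝ) 1, γ t ∈ Pn n) →
      pathLength g γ 0 1 ≥ 4 / Real.sqrt n * |qdet g (γ 1) - qdet g (γ 0)|) ∧
    ∀ a₀ ∈ Pn n, ∀ a₁ ∈ Pn n,
      ebinDist g a₀ a₁ ≥ 4 / Real.sqrt n * |qdet g a₁ - qdet g a₀| := by
  have hsqrt : 0 < √(n : ℝ) := Real.sqrt_pos.2 (by exact_mod_cast hn)
  have length_ge : ∀ γ : ℝ → Matrix (Fin n) (Fin n) ℝ, PiecewiseC1On γ 0 1 →
      (∀ t ∈ Icc (0 : ℝ) 1, γ t ∈ Pn n) →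
      pathLength g γ 0 1 ≥ 4 / √n * |qdet g (γ 1) - qdet g (γ 0)| := fun γ hγ hpos => by
    have := hγ.abs_qdet_sub_le_pathLength hg hpos
    rw [ge_iff_le, div_mul_eq_mul_div, div_le_iff₀ hsqrt]
    linarith
  refine ⟨length_ge, fun a₀ h₀ a₁ h₁ => le_csInf ?_ ?_⟩
  · exact ⟨_, _, piecewiseC1On_segment a₀ a₁, fun t ht => segment_mem_Pn h₀ h₁ ht,
      by simp, by simp, rfl⟩
  · rintro L ⟨γ, hγ, hpos, rfl, rfl, rfl⟩
    exact length_ge γ hγ hpos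

end
end

section
/- For a₁ ∈ P_n and 0 < ε ≤ 1, the radial path t ↦ t·a₁ on the interval [ε,1] is a C¹ path in P_n whose length equals (4/√n)·(1 − ε^{n/4})·(det(g⁻¹a₁))^{1/4}. In particular d(ε·a₁, a₁) ≤ (4/√n)·(1 − ε^{n/4})·(det(g⁻¹a₁))^{1/4}, and these lengths tend to (4/√n)·(det(g⁻¹a₁))^{1/4} as ε → 0. -/
open Matrix Real MeasureTheory Filter

noncomputable section

/-!
Along a path `t ↦ s(t) • a` the velocity `s'(t) • a` is a multiple of the base point, so
`tr(((s • a)⁻¹ (s' • a))²) = n (s'/s)²` while `det (g⁻¹ (s • a)) = sⁿ det (g⁻¹ a)`. For the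
radial path `s(t) = t` the speed is therefore `√n · t^{n/4 - 1} · (det g⁻¹a)^{1/4}`, with primitive
`(4/√n) · t^{n/4} · (det g⁻¹a)^{1/4}`. Reparametrising the radial path affinely over `[0, 1]`
gives a competitor in the definition of `d(ε a₁, a₁)`.
-/

section FiberNorm

variable {n : ℕ} {g a : Matrix (Fin n) (Fin n) ℝ}

lemma det_inv_mul_pos (hg : g.PosDef) (ha : a.PosDef) : 0 < (g⁻¹ * a).det := by
  rw [det_mul, det_nonsing_inv, Ring.inverse_eq_inv']
  exact mul_pos (inv_pos.2 hg.det_pos) ha.det_pos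

lemma qdet_nonneg (hg : g.PosDef) (ha : a.PosDef) : 0 ≤ qdet g a :=
  rpow_nonneg (det_inv_mul_pos hg ha).le _

lemma qdet_smul (hg : g.PosDef) (ha : a.PosDef) {s : ℝ} (hs : 0 ≤ s) :
    qdet g (s • a) = s ^ ((n : ℝ) / 4) * qdet g a := by
  rw [qdet, qdet, Matrix.mul_smul, det_smul, Fintype.card_fin,
    mul_rpow (pow_nonneg hs _) (det_inv_mul_pos hg ha).le,
    ← rpow_natCast s n, ← rpow_mul hs, mul_one_div]

lemma trSq_smul_smul (ha : IsUnit a.det) {s : ℝ} (hs : s ≠ 0) (m : ℝ) :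
    trSq (s • a) (m • a) = n * (m / s) ^ 2 := by
  have hinv : (s • a)⁻¹ = s⁻¹ • a⁻¹ := inv_eq_left_inv (by
    rw [smul_mul_smul, nonsing_inv_mul a ha, inv_mul_cancel₀ hs, one_smul])
  have hquot : (s • a)⁻¹ * (m • a) = (m / s) • (1 : Matrix (Fin n) (Fin n) ℝ) := by
    rw [hinv, smul_mul_smul, nonsing_inv_mul a ha, inv_mul_eq_div]
  rw [trSq, hquot, smul_mul_smul, Matrix.one_mul, trace_smul, trace_one, Fintype.card_fin,
    smul_eq_mul]
  ring

lemma fiberNorm_smul_smul (hg : g.PosDef) (ha : a.PosDef) {s m : ℝ} (hs : 0 < s) (hm : 0 ≤ m) :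
    fiberNorm g (s • a) (m • a) = √n * m * s ^ ((n : ℝ) / 4 - 1) * qdet g a := by
  rw [fiberNorm, trSq_smul_smul ha.det_pos.ne'.isUnit hs.ne', sqrt_mul (Nat.cast_nonneg n),
    sqrt_sq (div_nonneg hm hs.le), qdet_smul hg ha hs.le, rpow_sub hs, rpow_one]
  ring

end FiberNorm

section Paths

variable {n : ℕ}

lemma pathDeriv_affine_smul (a : Matrix (Fin n) (Fin n) ℝ) (c m t : ℝ) :
    pathDeriv (fun s : ℝ => (c + m * s) • a) t = m • a := by
  ext i j
  have hline : HasDerivAt (fun s : ℝ => c + m * s) m t := by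
    simpa using ((hasDerivAt_id t).const_mul m).const_add c
  exact (hline.mul_const (a i j)).deriv

lemma c1On_affine_smul (a : Matrix (Fin n) (Fin n) ℝ) (c m : ℝ) (S : Set ℝ) :
    C1On (fun t : ℝ => (c + m * t) • a) S := fun _ _ =>
  ((contDiff_const.add (contDiff_const.mul contDiff_id)).mul contDiff_const).contDiffOn

lemma PiecewiseC1On.of_c1On {γ : ℝ → Matrix (Fin n) (Fin n) ℝ} {t₀ t₁ : ℝ}
    (hγ : C1On γ (Set.Icc t₀ t₁)) (ht : t₀ < t₁) : PiecewiseC1On γ t₀ t₁ :=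
  ⟨continuousOn_pi.2 fun i => continuousOn_pi.2 fun j => (hγ i j).continuousOn,
    1, ![t₀, t₁], fun i j hij => by fin_cases i <;> fin_cases j <;> simp_all,
    rfl, rfl, fun i => by fin_cases i; exact hγ⟩

variable {g a : Matrix (Fin n) (Fin n) ℝ}

lemma pathLength_nonneg (hg : g.PosDef) {γ : ℝ → Matrix (Fin n) (Fin n) ℝ} {t₀ t₁ : ℝ}
    (ht : t₀ ≤ t₁) (hγ : ∀ t ∈ Set.Icc t₀ t₁, γ t ∈ Pn n) : 0 ≤ pathLength g γ t₀ t₁ :=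
  intervalIntegral.integral_nonneg ht fun t htm =>
    mul_nonneg (sqrt_nonneg _) (qdet_nonneg hg (hγ t htm))

lemma ebinDist_le_pathLength (hg : g.PosDef) {a₀ a₁ : Matrix (Fin n) (Fin n) ℝ}
    {γ : ℝ → Matrix (Fin n) (Fin n) ℝ} (hγ : PiecewiseC1On γ 0 1)
    (hγP : ∀ t ∈ Set.Icc (0 : ℝ) 1, γ t ∈ Pn n) (h0 : γ 0 = a₀) (h1 : γ 1 = a₁) :
    ebinDist g a₀ a₁ ≤ pathLength g γ 0 1 := by
  refine csInf_le ⟨0, ?_⟩ ⟨γ, hγ, hγP, h0, h1, rfl⟩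
  rintro L ⟨δ, -, hδP, -, -, rfl⟩
  exact pathLength_nonneg hg zero_le_one hδP

lemma pathLength_affine_smul (hg : g.PosDef) (ha : a.PosDef) {c m t₀ t₁ : ℝ} (hm : 0 ≤ m)
    (ht : t₀ ≤ t₁) (hpos : ∀ t ∈ Set.Icc t₀ t₁, 0 < c + m * t) :
    pathLength g (fun t : ℝ => (c + m * t) • a) t₀ t₁ =
      4 / √n * ((c + m * t₁) ^ ((n : ℝ) / 4) - (c + m * t₀) ^ ((n : ℝ) / 4)) * qdet g a := by
  rw [← Set.uIcc_of_le ht] at hpos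
  have hspeed : Set.EqOn
      (fun t => fiberNorm g ((c + m * t) • a) (pathDeriv (fun s : ℝ => (c + m * s) • a) t))
      (fun t => √n * m * (c + m * t) ^ ((n : ℝ) / 4 - 1) * qdet g a) (Set.uIcc t₀ t₁) :=
    fun t htm => by
      simp only [pathDeriv_affine_smul, fiberNorm_smul_smul hg ha (hpos t htm) hm]
  have hprim : ∀ t ∈ Set.uIcc t₀ t₁,
      HasDerivAt (fun u => 4 / √n * (c + m * u) ^ ((n : ℝ) / 4) * qdet g a)
        (√n * m * (c + m * t) ^ ((n : ℝ) / 4 - 1) * qdet g a) t := by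
    intro t htm
    have hline : HasDerivAt (fun u : ℝ => c + m * u) m t := by
      simpa using ((hasDerivAt_id t).const_mul m).const_add c
    refine (((hline.rpow_const (Or.inl (hpos t htm).ne')).const_mul (4 / √n)).mul_const
      (qdet g a)).congr_deriv ?_
    linear_combination m * (c + m * t) ^ ((n : ℝ) / 4 - 1) * qdet g a * div_sqrt (x := n)
  have hint : IntervalIntegrable (fun t => √n * m * (c + m * t) ^ ((n : ℝ) / 4 - 1) * qdet g a)
      volume t₀ t₁ :=
    (ContinuousOn.mul (continuousOn_const.mul (ContinuousOn.rpow_const (by fun_prop)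
      fun t htm => Or.inl (hpos t htm).ne')) continuousOn_const).intervalIntegrable
  rw [pathLength, intervalIntegral.integral_congr hspeed,
    intervalIntegral.integral_eq_sub_of_hasDerivAt hprim hint]
  ring

lemma pathLength_radial (hg : g.PosDef) (ha : a.PosDef) {t₀ t₁ : ℝ} (h₀ : 0 < t₀)
    (ht : t₀ ≤ t₁) :
    pathLength g (fun t : ℝ => t • a) t₀ t₁ =
      4 / √n * (t₁ ^ ((n : ℝ) / 4) - t₀ ^ ((n : ℝ) / 4)) * qdet g a := by
  simpa using pathLength_affine_smul hg ha (c := 0) zero_le_one ht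
    fun t htm => by simpa using h₀.trans_le htm.1

lemma ebinDist_smul_le (hg : g.PosDef) (ha : a.PosDef) {ε : ℝ} (hε : 0 < ε) (hε₁ : ε ≤ 1) :
    ebinDist g (ε • a) a ≤ 4 / √n * (1 - ε ^ ((n : ℝ) / 4)) * qdet g a := by
  have hpos : ∀ t ∈ Set.Icc (0 : ℝ) 1, 0 < ε + (1 - ε) * t := fun t htm =>
    add_pos_of_pos_of_nonneg hε (mul_nonneg (sub_nonneg.2 hε₁) htm.1)
  have hlen := pathLength_affine_smul hg ha (sub_nonneg.2 hε₁) zero_le_one hpos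
  simp only [mul_zero, add_zero, mul_one, add_sub_cancel, one_rpow] at hlen
  rw [← hlen]
  exact ebinDist_le_pathLength hg (.of_c1On (c1On_affine_smul a _ _ _) zero_lt_one)
    (fun t htm => ha.smul (hpos t htm)) (by simp) (by simp)

lemma tendsto_pathLength_radial (hn : 1 ≤ n) (hg : g.PosDef) (ha : a.PosDef) :
    Tendsto (fun ε : ℝ => pathLength g (fun t : ℝ => t • a) ε 1) (nhdsWithin 0 (Set.Ioi 0))
      (nhds (4 / √n * qdet g a)) := by
  have hp : (0 : ℝ) < n / 4 := by positivity
  have hpow : Tendsto (fun ε : ℝ => ε ^ ((n : ℝ) / 4)) (nhdsWithin 0 (Set.Ioi 0)) (nhds 0) := by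
    simpa [zero_rpow hp.ne'] using
      (continuousAt_rpow_const 0 _ (Or.inr hp.le)).tendsto.mono_left nhdsWithin_le_nhds
  have hlim := (((tendsto_const_nhds (x := (1 : ℝ))).sub hpow).const_mul (4 / √n)).mul_const (qdet g a)
  rw [sub_zero, mul_one] at hlim
  refine hlim.congr' ?_
  filter_upwards [Ioo_mem_nhdsGT zero_lt_one] with ε hε
  rw [pathLength_radial hg ha hε.1 hε.2.le, one_rpow]

end Paths

/-- the radial path `t ↦ t • a₁` on `[ε, 1]` and its length. -/
theorem stmt_2 (n : ℕ) (hn : 1 ≤ n) (g : Matrix (Fin n) (Fin n) ℝ) (hg : g ∈ Pn n)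
    (a₁ : Matrix (Fin n) (Fin n) ℝ) (ha₁ : a₁ ∈ Pn n) :
    (∀ ε : ℝ, 0 < ε → ε ≤ 1 →
      (∀ t ∈ Set.Icc ε 1, t • a₁ ∈ Pn n) ∧
      C1On (fun t : ℝ => t • a₁) (Set.Icc ε 1) ∧
      pathLength g (fun t : ℝ => t • a₁) ε 1 =
        4 / Real.sqrt n * (1 - ε ^ ((n : ℝ) / 4)) * qdet g a₁ ∧
      ebinDist g (ε • a₁) a₁ ≤ 4 / Real.sqrt n * (1 - ε ^ ((n : ℝ) / 4)) * qdet g a₁) ∧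
    Filter.Tendsto (fun ε : ℝ => pathLength g (fun t : ℝ => t • a₁) ε 1)
      (nhdsWithin 0 (Set.Ioi 0)) (nhds (4 / Real.sqrt n * qdet g a₁)) := by
  refine ⟨fun ε hε hε₁ => ⟨fun t htm => ha₁.smul (hε.trans_le htm.1), ?_, ?_,
    ebinDist_smul_le hg ha₁ hε hε₁⟩, tendsto_pathLength_radial hn hg ha₁⟩
  · simpa using c1On_affine_smul a₁ 0 1 (Set.Icc ε 1)
  · rw [pathLength_radial hg ha₁ hε hε₁, one_rpow]

end
end

section
/- Let a₀ ∈ P_n and let b be a symmetric n×n matrix with 0 < tr_{a₀}(b_T²) < (4π)²/n. Then the explicit geodesic a_t with initial point a₀ and initial tangent h := ψ(b) is defined for all t ∈ [0,1] and satisfies a_0 = a₀ and a_1 = a₀·exp(a₀⁻¹b). (That is, the Riemannian exponential map of (P_n, ‖·‖) at a₀ sends ψ(b) to a₀·exp(a₀⁻¹b).) -/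
open Matrix Real MeasureTheory Filter

noncomputable section

/-! Put `E = e^{tr_{a₀}(b)/4}` and let `ω` be the angle in `ψ`. The tangent `ψ(b)` has
`a₀`-trace `4 (E cos ω - 1)` and traceless part `(E sin ω / ω) b_T`, so the complex number
`q(t) + i r(t)` driving the geodesic runs along the segment from `1` to `E e^{iω}`. As
`0 < ω < π`, that segment avoids `0`, so each `a_t` is a positive multiple of `a₀ exp(a₀⁻¹ c)`
with `c` symmetric, which is positive definite. At `t = 1` the modulus gives the factor
`e^{tr_{a₀}(b)/n}` and the argument is exactly `ω`, and these reassemble `a₀ exp(a₀⁻¹ b)` because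
`a₀⁻¹ b_T` commutes with the scalar part `(tr_{a₀}(b)/n) · 1` of `a₀⁻¹ b`. -/

section RealMatrix

open scoped MatrixOrder

variable {m : Type*} [Fintype m] [DecidableEq m]

theorem Matrix.IsSymm.posDef_exp {S : Matrix m m ℝ} (hS : S.IsSymm) :
    (NormedSpace.exp S).PosDef := by
  have hsq : NormedSpace.exp S =
      (NormedSpace.exp ((1 / 2 : ℝ) • S))ᴴ * NormedSpace.exp ((1 / 2 : ℝ) • S) := by
    rw [conjTranspose_eq_transpose_of_trivial, ← Matrix.exp_transpose, (hS.smul _).eq,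
      ← Matrix.exp_add_of_commute _ _ (Commute.refl _), ← add_smul]
    norm_num
  rw [hsq]
  exact PosDef.conjTranspose_mul_self _ (mulVec_injective_iff_isUnit.2 (Matrix.isUnit_exp _))

theorem Matrix.PosDef.exists_isSymm_mul_self {a : Matrix m m ℝ} (ha : a.PosDef) :
    ∃ u : Matrix m m ℝ, u.IsSymm ∧ IsUnit u ∧ u * u = a := by
  have hu : CFC.sqrt a * CFC.sqrt a = a := CFC.sqrt_mul_sqrt_self a ha.posSemidef.nonneg
  exact ⟨CFC.sqrt a, isHermitian_iff_isSymm.1 (CFC.sqrt_nonneg a).posSemidef.isHermitian,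
    isUnit_of_mul_isUnit_left (hu ▸ ha.isUnit), hu⟩

/-- Writing `a = u²`, the matrix `a * exp (a⁻¹ * c)` is the congruence `u * exp S * u` of the
positive definite `exp S`, where `S = u⁻¹ * c * u⁻¹` is symmetric. -/
theorem Matrix.PosDef.mul_exp_inv_mul {a c : Matrix m m ℝ} (ha : a.PosDef) (hc : c.IsSymm) :
    (a * NormedSpace.exp (a⁻¹ * c)).PosDef := by
  obtain ⟨u, hu, hu_unit, rfl⟩ := ha.exists_isSymm_mul_self
  have hu_det : IsUnit u.det := (isUnit_iff_isUnit_det u).1 hu_unit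
  have hconj : (u * u)⁻¹ * c = u⁻¹ * (u⁻¹ * c * u⁻¹) * u := by
    simp only [Matrix.mul_inv_rev, Matrix.mul_assoc, nonsing_inv_mul _ hu_det, Matrix.mul_one]
  have hS : (u⁻¹ * c * u⁻¹).IsSymm := by
    have hu_inv : u⁻¹.IsSymm := by rw [IsSymm, transpose_nonsing_inv, hu.eq]
    rw [IsSymm, transpose_mul, transpose_mul, hu_inv.eq, hc.eq, Matrix.mul_assoc]
  have hpos := hS.posDef_exp.conjTranspose_mul_mul_same (mulVec_injective_iff_isUnit.2 hu_unit)
  rw [conjTranspose_eq_transpose_of_trivial, hu.eq] at hpos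
  rw [hconj, exp_conj' _ _ hu_unit]
  simpa only [Matrix.mul_assoc, Matrix.mul_nonsing_inv_cancel_left _ _ hu_det] using hpos

theorem Matrix.exp_algebraMap (s : ℝ) :
    NormedSpace.exp (algebraMap ℝ (Matrix m m ℝ) s) = algebraMap ℝ _ (Real.exp s) := by
  open scoped Norms.Operator in
  rw [Real.exp_eq_exp_ℝ]
  exact (NormedSpace.algebraMap_exp_comm s).symm

end RealMatrix

section TraceForm

variable {n : ℕ} {a : Matrix (Fin n) (Fin n) ℝ}

theorem trA_add (a x y : Matrix (Fin n) (Fin n) ℝ) : trA a (x + y) = trA a x + trA a y := by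
  simp [trA, Matrix.mul_add]

theorem trA_smul (a x : Matrix (Fin n) (Fin n) ℝ) (s : ℝ) : trA a (s • x) = s * trA a x := by
  simp [trA]

theorem trA_self (ha : IsUnit a.det) : trA a a = n := by
  simp [trA, nonsing_inv_mul a ha]

theorem trSq_smul (a x : Matrix (Fin n) (Fin n) ℝ) (s : ℝ) :
    trSq a (s • x) = s ^ 2 * trSq a x := by
  simp only [trSq, Algebra.mul_smul_comm, Algebra.smul_mul_assoc, trace_smul, smul_eq_mul]
  ring

theorem tracelessPart_add_smul_self (a b : Matrix (Fin n) (Fin n) ℝ) :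
    tracelessPart a b + (trA a b / n) • a = b :=
  sub_add_cancel _ _

theorem trA_tracelessPart (ha : IsUnit a.det) (hn : n ≠ 0) (b : Matrix (Fin n) (Fin n) ℝ) :
    trA a (tracelessPart a b) = 0 := by
  rw [tracelessPart, sub_eq_add_neg, ← neg_smul, trA_add, trA_smul, trA_self ha]
  field_simp
  ring

theorem Matrix.IsSymm.tracelessPart {b : Matrix (Fin n) (Fin n) ℝ} (ha : a.IsSymm)
    (hb : b.IsSymm) : (tracelessPart a b).IsSymm :=
  hb.sub (ha.smul _)

theorem trA_smul_self_add_smul (ha : IsUnit a.det) {x : Matrix (Fin n) (Fin n) ℝ}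
    (hx : trA a x = 0) (α β : ℝ) : trA a (α • a + β • x) = α * n := by
  rw [trA_add, trA_smul, trA_smul, trA_self ha, hx, mul_zero, add_zero]

theorem tracelessPart_smul_self_add_smul (ha : IsUnit a.det) (hn : n ≠ 0)
    {x : Matrix (Fin n) (Fin n) ℝ} (hx : trA a x = 0) (α β : ℝ) :
    tracelessPart a (α • a + β • x) = β • x := by
  rw [tracelessPart, trA_smul_self_add_smul ha hx, mul_div_cancel_right₀ _ (by exact_mod_cast hn)]
  abel

theorem expAt_eq_smul_tracelessPart (ha : IsUnit a.det) (b : Matrix (Fin n) (Fin n) ℝ) :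
    expAt a b = Real.exp (trA a b / n) • (a * NormedSpace.exp (a⁻¹ * tracelessPart a b)) := by
  have hcomm : Commute (a⁻¹ * tracelessPart a b) (algebraMap ℝ _ (trA a b / n)) :=
    Algebra.commutes _ _ |>.symm
  conv_lhs => rw [expAt, ← tracelessPart_add_smul_self a b]
  rw [Matrix.mul_add, mul_smul_comm, nonsing_inv_mul a ha, ← Algebra.algebraMap_eq_smul_one,
    Matrix.exp_add_of_commute _ _ hcomm, Matrix.exp_algebraMap, Algebra.algebraMap_eq_smul_one,
    Matrix.mul_smul, Matrix.mul_one, mul_smul_comm]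

end TraceForm

section Geodesic

def psiSegment (E ω t : ℝ) : ℂ := ⟨1 + t * (E * Real.cos ω - 1), t * (E * Real.sin ω)⟩

theorem psiSegment_zero (E ω : ℝ) : psiSegment E ω 0 = 1 := by
  apply Complex.ext <;> simp [psiSegment]

theorem psiSegment_ne_zero {E ω t : ℝ} (h : 0 < E * Real.sin ω) (ht : 0 ≤ t) :
    psiSegment E ω t ≠ 0 := by
  rcases ht.eq_or_lt with rfl | ht
  · simp [psiSegment_zero]
  · intro h0
    have := congrArg Complex.im h0
    simp only [psiSegment, Complex.zero_im] at this
    exact (mul_pos ht h).ne' this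

theorem psiSegment_one (E ω : ℝ) :
    psiSegment E ω 1 = E * (Complex.cos ω + Complex.sin ω * Complex.I) := by
  apply Complex.ext <;> simp [psiSegment, Complex.cos_ofReal_re, Complex.sin_ofReal_re]

theorem arg_psiSegment_one {E ω : ℝ} (hE : 0 < E) (hω : ω ∈ Set.Ioc (-π) π) :
    (psiSegment E ω 1).arg = ω := by
  rw [psiSegment_one, Complex.arg_mul_cos_add_sin_mul_I hE hω]

theorem normSq_psiSegment_one (E ω : ℝ) : Complex.normSq (psiSegment E ω 1) = E ^ 2 := by
  rw [psiSegment_one, Complex.normSq_mul, Complex.normSq_ofReal, ← Complex.exp_mul_I,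
    Complex.normSq_eq_norm_sq, Complex.norm_exp_ofReal_mul_I]
  ring

variable {n : ℕ} {a : Matrix (Fin n) (Fin n) ℝ} {b : Matrix (Fin n) (Fin n) ℝ}

def psiAngle (a b : Matrix (Fin n) (Fin n) ℝ) : ℝ :=
  Real.sqrt ((n : ℝ) * trSq a (tracelessPart a b)) / 4

theorem psiAngle_mem_Ioo (hn : n ≠ 0) (hpos : 0 < trSq a (tracelessPart a b))
    (hlt : trSq a (tracelessPart a b) < (4 * π) ^ 2 / n) : psiAngle a b ∈ Set.Ioo 0 π := by
  have hnR : (0 : ℝ) < n := by positivity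
  have hsqrt : Real.sqrt (n * trSq a (tracelessPart a b)) < 4 * π :=
    (Real.sqrt_lt' (by positivity)).2 (by rwa [lt_div_iff₀' hnR] at hlt)
  exact ⟨by unfold psiAngle; positivity, by unfold psiAngle; linarith⟩

theorem psiMap_eq (hb : tracelessPart a b ≠ 0) :
    psiMap a b = ((4 / (n : ℝ)) * (Real.exp (trA a b / 4) * Real.cos (psiAngle a b) - 1)) • a +
      (Real.exp (trA a b / 4) * Real.sin (psiAngle a b) / psiAngle a b) • tracelessPart a b := by
  simp only [psiMap, psiAngle, if_neg hb]
  congr 2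
  ring

theorem geodesicPath_psiMap (ha : IsUnit a.det) (hn : n ≠ 0)
    (hpos : 0 < trSq a (tracelessPart a b)) (hsin : 0 < Real.sin (psiAngle a b)) (t : ℝ) :
    geodesicPath a (psiMap a b) t =
      Complex.normSq (psiSegment (Real.exp (trA a b / 4)) (psiAngle a b) t) ^ ((2 : ℝ) / n) •
        (a * NormedSpace.exp
          (a⁻¹ * (((psiSegment (Real.exp (trA a b / 4)) (psiAngle a b) t).arg / psiAngle a b) •
            tracelessPart a b))) := by
  set E := Real.exp (trA a b / 4)
  set ω := psiAngle a b with hω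
  have hω0 : 0 < ω := by unfold ω psiAngle; positivity
  have hbT : tracelessPart a b ≠ 0 := by rintro h; simp [h, trSq] at hpos
  have hE : 0 < E := Real.exp_pos _
  have hd : 0 < E * Real.sin ω / ω := by positivity
  have htr := trA_smul_self_add_smul ha (trA_tracelessPart ha hn b)
    (4 / n * (E * Real.cos ω - 1)) (E * Real.sin ω / ω)
  have htp := tracelessPart_smul_self_add_smul ha hn (trA_tracelessPart ha hn b)
    (4 / n * (E * Real.cos ω - 1)) (E * Real.sin ω / ω)
  have hsqrt :
      Real.sqrt (n * trSq a ((E * Real.sin ω / ω) • tracelessPart a b)) = 4 * (E * Real.sin ω) := by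
    rw [trSq_smul, mul_left_comm, Real.sqrt_mul (by positivity), Real.sqrt_sq hd.le,
      show Real.sqrt (n * trSq a (tracelessPart a b)) = 4 * ω by rw [hω, psiAngle]; ring]
    field_simp
  rw [← psiMap_eq hbT] at htr htp
  simp only [geodesicPath, htr, htp, if_neg (smul_ne_zero hd.ne' hbT), hsqrt]
  have hz : (⟨1 + t / 4 * (4 / n * (E * Real.cos ω - 1) * n),
      t / 4 * (4 * (E * Real.sin ω))⟩ : ℂ) = psiSegment E ω t := by
    apply Complex.ext <;> simp only [psiSegment] <;> field_simp
  rw [hz, ← mul_smul_comm _ a⁻¹, smul_smul]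
  congr 1
  · rw [← hz, Complex.normSq_mk]
    ring_nf
  · congr 3
    field_simp

end Geodesic

/-- the explicit geodesic with initial tangent `ψ(b)` joins `a₀` to
`a₀·exp(a₀⁻¹b)` within `P_n`. -/
theorem stmt_10 (n : ℕ) (hn : 1 ≤ n)
    (a₀ : Matrix (Fin n) (Fin n) ℝ) (ha₀ : a₀ ∈ Pn n)
    (b : Matrix (Fin n) (Fin n) ℝ) (hb : b.IsSymm)
    (hpos : 0 < trSq a₀ (tracelessPart a₀ b))
    (hlt : trSq a₀ (tracelessPart a₀ b) < (4 * Real.pi) ^ 2 / n) :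
    (∀ t ∈ Set.Icc (0 : ℝ) 1, geodesicPath a₀ (psiMap a₀ b) t ∈ Pn n) ∧
    geodesicPath a₀ (psiMap a₀ b) 0 = a₀ ∧
    geodesicPath a₀ (psiMap a₀ b) 1 = expAt a₀ b := by
  have ha : a₀.PosDef := ha₀
  have hdet : IsUnit a₀.det := (isUnit_iff_isUnit_det a₀).1 ha.isUnit
  have hn0 : n ≠ 0 := Nat.one_le_iff_ne_zero.1 hn
  have hE : 0 < Real.exp (trA a₀ b / 4) := Real.exp_pos _
  obtain ⟨hω0, hωπ⟩ := psiAngle_mem_Ioo hn0 hpos hlt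
  have hsin := Real.sin_pos_of_pos_of_lt_pi hω0 hωπ
  have hgeo := geodesicPath_psiMap hdet hn0 hpos hsin
  refine ⟨fun t ht => ?_, ?_, ?_⟩
  · have hbT := (isHermitian_iff_isSymm.1 ha.isHermitian).tracelessPart hb
    have hz := psiSegment_ne_zero (mul_pos hE hsin) ht.1
    rw [hgeo]
    exact PosDef.smul (ha.mul_exp_inv_mul (hbT.smul _))
      (Real.rpow_pos_of_pos (Complex.normSq_pos.2 hz) _)
  · simp [hgeo, psiSegment_zero]
  · have hscale : (Real.exp (trA a₀ b / 4) ^ 2) ^ ((2 : ℝ) / n) = Real.exp (trA a₀ b / n) := by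
      rw [← Real.exp_nat_mul, ← Real.exp_mul]
      congr 1
      field_simp
      ring
    rw [hgeo, arg_psiSegment_one hE ⟨by linarith [Real.pi_pos], hωπ.le⟩, normSq_psiSegment_one,
      div_self hω0.ne', one_smul, hscale, expAt_eq_smul_tracelessPart hdet]

end
end

section
/- Let a < b be real numbers and let r : [a,b] → ℝ be continuously differentiable. Define r̂(t) := min( max_{s ∈ [a,t]} r(s), 1 ). Then r̂ is continuous, monotone nondecreasing, and maps Lebesgue-null subsets of [a,b] to Lebesgue-null sets; consequently r̂ is differentiable almost everywhere, its almost-everywhere derivative r̂' is Lebesgue integrable on [a,b], and r̂(b) − r̂(a) = ∫_a^b r̂'(t) dt. -/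
/-!
A `C¹` function is `K`-Lipschitz on `[a, b]`, and so is its running maximum: for `u ≤ v` the
values of `r` on `[u, v]` are at most `r u + K (v - u)`. Capping at `1` keeps the Lipschitz bound, and a
Lipschitz function on an interval is absolutely continuous, so it maps null sets to null sets,
is differentiable almost everywhere and is the integral of its derivative.
-/

open Matrix Real MeasureTheory Filter

noncomputable section

open Set

open scoped NNReal

section RunningMax

variable {f : ℝ → ℝ} {a b : ℝ}

theorem bddAbove_image_Icc_of_continuousOn (hf : ContinuousOn f (Icc a b)) {t : ℝ}
    (ht : t ∈ Icc a b) : BddAbove (f '' Icc a t) :=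
  (isCompact_Icc.image_of_continuousOn (hf.mono (Icc_subset_Icc_right ht.2))).bddAbove

theorem monotoneOn_sSup_image_Icc (hf : ContinuousOn f (Icc a b)) :
    MonotoneOn (fun t => sSup (f '' Icc a t)) (Icc a b) := fun _ hu _ hv huv =>
  csSup_le_csSup (bddAbove_image_Icc_of_continuousOn hf hv)
    ((nonempty_Icc.2 hu.1).image f) (image_mono (Icc_subset_Icc_right huv))

theorem LipschitzOnWith.sSup_image_Icc_le_add_mul {K : ℝ≥0}
    (hf : LipschitzOnWith K f (Icc a b)) {u v : ℝ} (hu : u ∈ Icc a b) (hv : v ∈ Icc a b)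
    (huv : u ≤ v) : sSup (f '' Icc a v) ≤ sSup (f '' Icc a u) + K * (v - u) := by
  have hle_sSup : ∀ x ∈ Icc a u, f x ≤ sSup (f '' Icc a u) := fun x hx =>
    le_csSup (bddAbove_image_Icc_of_continuousOn hf.continuousOn hu) (mem_image_of_mem f hx)
  refine csSup_le ((nonempty_Icc.2 hv.1).image f) ?_
  rintro _ ⟨w, hw, rfl⟩
  rcases le_total w u with hwu | huw
  · have : 0 ≤ (K : ℝ) * (v - u) := mul_nonneg K.coe_nonneg (sub_nonneg.2 huv)
    linarith [hle_sSup w ⟨hw.1, hwu⟩]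
  · have hfw : f w - f u ≤ K * (w - u) := by
      have := hf.dist_le_mul w ⟨hw.1, hw.2.trans hv.2⟩ u hu
      rw [Real.dist_eq, Real.dist_eq, abs_of_nonneg (sub_nonneg.2 huw)] at this
      exact (le_abs_self _).trans this
    have : (K : ℝ) * (w - u) ≤ K * (v - u) := by gcongr; exact hw.2
    linarith [hle_sSup u ⟨hu.1, le_rfl⟩]

theorem LipschitzOnWith.sSup_image_Icc {K : ℝ≥0} (hf : LipschitzOnWith K f (Icc a b)) :
    LipschitzOnWith K (fun t => sSup (f '' Icc a t)) (Icc a b) := by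
  refine LipschitzOnWith.of_le_add_mul K fun v hv u hu => ?_
  rcases le_total v u with hvu | huv
  · have := monotoneOn_sSup_image_Icc hf.continuousOn hv hu hvu
    have : 0 ≤ (K : ℝ) * dist v u := by positivity
    linarith
  · rw [Real.dist_eq, abs_of_nonneg (sub_nonneg.2 huv)]
    exact hf.sSup_image_Icc_le_add_mul hu hv huv

end RunningMax

theorem LipschitzOnWith.volume_image_eq_zero {f : ℝ → ℝ} {K : ℝ≥0} {s : Set ℝ}
    (hf : LipschitzOnWith K f s) (hs : volume s = 0) : volume (f '' s) = 0 := by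
  have := hf.hausdorffMeasure_image_le zero_le_one
  rwa [hausdorffMeasure_real, hs, mul_zero, nonpos_iff_eq_zero] at this

/-- absolute continuity of the capped running maximum of a `C¹` function. -/
theorem stmt_11 (a b : ℝ) (hab : a < b) (r : ℝ → ℝ)
    (hr : ContDiffOn ℝ 1 r (Set.Icc a b)) :
    letI rhat : ℝ → ℝ := fun t => min (sSup (r '' Set.Icc a t)) 1
    ContinuousOn rhat (Set.Icc a b) ∧
    MonotoneOn rhat (Set.Icc a b) ∧
    (∀ N : Set ℝ, N ⊆ Set.Icc a b → MeasureTheory.volume N = 0 →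
      MeasureTheory.volume (rhat '' N) = 0) ∧
    (∀ᵐ t ∂(MeasureTheory.volume.restrict (Set.Icc a b)), DifferentiableAt ℝ rhat t) ∧
    MeasureTheory.IntegrableOn (deriv rhat) (Set.Icc a b) ∧
    rhat b - rhat a = ∫ t in a..b, deriv rhat t := by
  set rhat : ℝ → ℝ := fun t => min (sSup (r '' Icc a t)) 1
  obtain ⟨K, hK⟩ := hr.exists_lipschitzOnWith one_ne_zero (convex_Icc a b) isCompact_Icc
  have hlip : LipschitzOnWith K rhat (Icc a b) := by
    have := (LipschitzWith.id.min_const 1).comp_lipschitzOnWith hK.sSup_image_Icc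
    rwa [one_mul] at this
  have hac : AbsolutelyContinuousOnInterval rhat a b :=
    (uIcc_of_le hab.le ▸ hlip).absolutelyContinuousOnInterval
  refine ⟨hlip.continuousOn, ?_, fun N hN hN0 => (hlip.mono hN).volume_image_eq_zero hN0, ?_, ?_,
    hac.integral_deriv_eq_sub.symm⟩
  · exact fun u hu v hv huv =>
      min_le_min_right 1 (monotoneOn_sSup_image_Icc hr.continuousOn hu hv huv)
  · rw [ae_restrict_iff' measurableSet_Icc]
    simpa only [uIcc_of_le hab.le] using hac.ae_differentiableAt
  · exact (intervalIntegrable_iff_integrableOn_Icc_of_le hab.le).1 hac.intervalIntegrable_deriv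

end
end
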